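/- Let n ≥ 5 be an integer and let v : ℝ → (0,∞) be a C⁴ function. Define u : ℝⁿ \ {0} → (0,∞) by u(x) = |x|^{(4−n)/2} v(−log|x|). Then u satisfies Δ²u = (n(n−4)(n²−4)/16) u^{(n+4)/(n−4)} on ℝⁿ \ {0} if and only if v satisfies the Delaunay ODE v⁗ − ((n(n−4)+8)/2) v″ + (n²(n−4)²/16) v − (n(n²−4)(n−4)/16) v^{(n+4)/(n−4)} = 0 on ℝ. -/

import Mathlib

/-! In Emden–Fowler coordinates `t = -log r`, the Laplacian of `r ^ b * φ (-log r)` is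
`r ^ (b - 2) * (φ'' - (2b + n - 2) φ' + b (b + n - 2) φ) (-log r)`. For the conformal exponent
`b = (4 - n) / 2` the two Laplacians act on the profile as `D² - 2D - c` and `D² + 2D - c` with
`c = n (n - 4) / 4`, whose product `D⁴ - (2c + 4) D² + c²` is the linear part of the Delaunay
operator. The nonlinearity `u ^ ((n + 4) / (n - 4))` carries the same weight `r ^ (-(n + 4) / 2)`,
which cancels. -/

open scoped BigOperators

/-- The Euclidean Laplacian on `ℝⁿ`: the sum of the second partial derivatives. -/
noncomputable def Lap {n : ℕ} (u : EuclideanSpace ℝ (Fin n) → ℝ) :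
    EuclideanSpace ℝ (Fin n) → ℝ := fun x =>
  ∑ i : Fin n,
    fderiv ℝ (fun y => fderiv ℝ u y (EuclideanSpace.single i 1)) x (EuclideanSpace.single i 1)

/-- The bilaplacian `Δ² = Δ ∘ Δ`. -/
noncomputable def BiLap {n : ℕ} (u : EuclideanSpace ℝ (Fin n) → ℝ) :
    EuclideanSpace ℝ (Fin n) → ℝ := Lap (Lap u)

open Real Filter Topology
open scoped RealInnerProductSpace

theorem Filter.EventuallyEq.lap_eq {n : ℕ} {u₁ u₂ : EuclideanSpace ℝ (Fin n) → ℝ}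
    {x : EuclideanSpace ℝ (Fin n)} (h : u₁ =ᶠ[𝓝 x] u₂) : Lap u₁ x = Lap u₂ x := by
  refine Finset.sum_congr rfl fun i _ => ?_
  have hd : (fun y => fderiv ℝ u₁ y (EuclideanSpace.single i 1)) =ᶠ[𝓝 x]
      fun y => fderiv ℝ u₂ y (EuclideanSpace.single i 1) :=
    h.eventuallyEq_nhds.mono fun y hy => by simp only [hy.fderiv_eq]
  rw [hd.fderiv_eq]

section Radial

variable {E : Type*} [NormedAddCommGroup E] [InnerProductSpace ℝ E] {f f' f'' : ℝ → ℝ}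

theorem hasFDerivAt_norm_of_ne_zero {x : E} (hx : x ≠ 0) :
    HasFDerivAt (‖·‖) (‖x‖⁻¹ • innerSL ℝ x) x := by
  have hr : 0 < ‖x‖ := norm_pos_iff.2 hx
  have h := (Real.hasDerivAt_sqrt (by positivity : (‖x‖ ^ 2) ≠ 0)).comp_hasFDerivAt x
    (hasStrictFDerivAt_norm_sq x).hasFDerivAt
  rw [show Real.sqrt ∘ (‖·‖ ^ 2) = (‖·‖ : E → ℝ) from funext fun y => sqrt_sq (norm_nonneg y),
    sqrt_sq hr.le] at h
  refine h.congr_fderiv (ContinuousLinearMap.ext fun y => ?_)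
  simp only [smul_apply, coe_innerSL_apply, nsmul_eq_mul, Nat.cast_ofNat, smul_eq_mul]
  field_simp

theorem fderiv_comp_norm_apply (hf : ∀ r, 0 < r → HasDerivAt f (f' r) r) {y : E} (hy : y ≠ 0)
    (w : E) : fderiv ℝ (fun y => f ‖y‖) y w = f' ‖y‖ * (‖y‖⁻¹ * ⟪y, w⟫) := by
  have hd : HasFDerivAt (fun y : E => f ‖y‖) _ y :=
    (hf _ (norm_pos_iff.2 hy)).comp_hasFDerivAt y (hasFDerivAt_norm_of_ne_zero hy)
  rw [hd.fderiv]
  simp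

theorem fderiv_fderiv_comp_norm_apply (hf : ∀ r, 0 < r → HasDerivAt f (f' r) r)
    (hf' : ∀ r, 0 < r → HasDerivAt f' (f'' r) r) {x : E} (hx : x ≠ 0) (w : E) :
    fderiv ℝ (fun y => fderiv ℝ (fun y => f ‖y‖) y w) x w =
      f'' ‖x‖ * (‖x‖⁻¹ * ⟪x, w⟫) ^ 2 + f' ‖x‖ * (‖x‖⁻¹ * ‖w‖ ^ 2 - ‖x‖⁻¹ ^ 3 * ⟪x, w⟫ ^ 2) := by
  have hr : 0 < ‖x‖ := norm_pos_iff.2 hx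
  have hev : (fun y => fderiv ℝ (fun y => f ‖y‖) y w) =ᶠ[𝓝 x]
      fun y => f' ‖y‖ * (‖y‖⁻¹ * ⟪y, w⟫) :=
    eventuallyEq_of_mem (isOpen_compl_singleton.mem_nhds hx) fun y hy =>
      fderiv_comp_norm_apply hf hy w
  have hnorm := hasFDerivAt_norm_of_ne_zero hx
  have hd : HasFDerivAt (fun y => f' ‖y‖ * (‖y‖⁻¹ * ⟪y, w⟫)) _ x :=
    ((hf' _ hr).comp_hasFDerivAt x hnorm).mul
      (((hasDerivAt_inv hr.ne').comp_hasFDerivAt x hnorm).mul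
        ((innerSL ℝ w).hasFDerivAt.congr_of_eventuallyEq
          (Eventually.of_forall fun y => real_inner_comm w y)))
  rw [hev.fderiv_eq, hd.fderiv]
  simp only [Function.comp_apply, real_inner_comm w x, smul_add, add_apply, smul_apply,
    coe_innerSL_apply, real_inner_self_eq_norm_sq, smul_eq_mul, neg_mul]
  ring

end Radial

theorem lap_comp_norm {n : ℕ} {f f' f'' : ℝ → ℝ} (hf : ∀ r, 0 < r → HasDerivAt f (f' r) r)
    (hf' : ∀ r, 0 < r → HasDerivAt f' (f'' r) r) {x : EuclideanSpace ℝ (Fin n)} (hx : x ≠ 0) :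
    Lap (fun y => f ‖y‖) x = f'' ‖x‖ + (n - 1) / ‖x‖ * f' ‖x‖ := by
  simp only [Lap, fderiv_fderiv_comp_norm_apply hf hf' hx, EuclideanSpace.inner_single_right,
    PiLp.norm_single, norm_one, one_pow, conj_trivial, one_mul, mul_pow, Finset.sum_add_distrib,
    ← Finset.mul_sum, Finset.sum_sub_distrib, ← EuclideanSpace.real_norm_sq_eq, Finset.sum_const,
    Finset.card_univ, Fintype.card_fin, nsmul_eq_mul]
  field_simp

section EmdenFowler

variable {φ φ' φ'' : ℝ → ℝ}

theorem hasDerivAt_rpow_mul_comp_neg_log (a : ℝ) (hφ : ∀ t, HasDerivAt φ (φ' t) t) {r : ℝ}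
    (hr : 0 < r) :
    HasDerivAt (fun s => s ^ a * φ (-log s)) (r ^ (a - 1) * (a * φ (-log r) - φ' (-log r))) r := by
  have h : HasDerivAt (fun s => s ^ a * φ (-log s)) _ r :=
    (hasDerivAt_rpow_const (p := a) (Or.inl hr.ne')).mul
      ((hφ _).comp r (hasDerivAt_log hr.ne').neg)
  refine h.congr_deriv ?_
  rw [rpow_sub hr, rpow_one]
  field_simp
  ring

theorem lap_rpow_norm_mul_comp_neg_log {n : ℕ} (b : ℝ) (hφ : ∀ t, HasDerivAt φ (φ' t) t)
    (hφ' : ∀ t, HasDerivAt φ' (φ'' t) t) {x : EuclideanSpace ℝ (Fin n)} (hx : x ≠ 0) :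
    Lap (fun y => ‖y‖ ^ b * φ (-log ‖y‖)) x =
      ‖x‖ ^ (b - 2) * (φ'' (-log ‖x‖) - (2 * b + n - 2) * φ' (-log ‖x‖) +
        b * (b + n - 2) * φ (-log ‖x‖)) := by
  have hr : 0 < ‖x‖ := norm_pos_iff.2 hx
  rw [lap_comp_norm (fun r hr => hasDerivAt_rpow_mul_comp_neg_log b hφ hr)
    (fun r hr => hasDerivAt_rpow_mul_comp_neg_log (φ := fun t => b * φ t - φ' t) (b - 1)
      (fun t => ((hφ t).const_mul b).sub (hφ' t)) hr) hx,
    show b - 1 - 1 = b - 2 by ring, show b - 1 = b - 2 + 1 by ring, rpow_add hr, rpow_one]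
  field_simp
  ring

end EmdenFowler

theorem hasDerivAt_iteratedDeriv {f : ℝ → ℝ} {m : WithTop ℕ∞} (hf : ContDiff ℝ m f) {k : ℕ}
    (hk : k < m) (t : ℝ) : HasDerivAt (iteratedDeriv k f) (iteratedDeriv (k + 1) f t) t := by
  rw [iteratedDeriv_succ]
  exact (hf.differentiable_iteratedDeriv k hk t).hasDerivAt

theorem biLap_emdenFowler {n : ℕ} {v v₁ v₂ v₃ v₄ : ℝ → ℝ} (h₀ : ∀ t, HasDerivAt v (v₁ t) t)
    (h₁ : ∀ t, HasDerivAt v₁ (v₂ t) t) (h₂ : ∀ t, HasDerivAt v₂ (v₃ t) t)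
    (h₃ : ∀ t, HasDerivAt v₃ (v₄ t) t) {x : EuclideanSpace ℝ (Fin n)} (hx : x ≠ 0) :
    BiLap (fun y => ‖y‖ ^ (((4 : ℝ) - n) / 2) * v (-log ‖y‖)) x =
      ‖x‖ ^ (((4 : ℝ) - n) / 2 - 4) *
        (v₄ (-log ‖x‖) - ((n * (n - 4) + 8) / 2 : ℝ) * v₂ (-log ‖x‖) +
          (n ^ 2 * (n - 4) ^ 2 / 16 : ℝ) * v (-log ‖x‖)) := by
  set a : ℝ := ((4 : ℝ) - n) / 2 with ha
  set c : ℝ := n * (n - 4) / 4 with hc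
  have lap_u : Lap (fun y => ‖y‖ ^ a * v (-log ‖y‖)) =ᶠ[𝓝 x]
      fun y => ‖y‖ ^ (a - 2) * (fun t => v₂ t - 2 * v₁ t - c * v t) (-log ‖y‖) := by
    refine eventuallyEq_of_mem (isOpen_compl_singleton.mem_nhds hx) fun y hy => ?_
    rw [lap_rpow_norm_mul_comp_neg_log a h₀ h₁ hy, ha, hc]
    ring_nf
  have hψ (t : ℝ) : HasDerivAt (fun t => v₂ t - 2 * v₁ t - c * v t)
      (v₃ t - 2 * v₂ t - c * v₁ t) t :=
    ((h₂ t).sub ((h₁ t).const_mul 2)).sub ((h₀ t).const_mul c)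
  have hψ' (t : ℝ) : HasDerivAt (fun t => v₃ t - 2 * v₂ t - c * v₁ t)
      (v₄ t - 2 * v₃ t - c * v₂ t) t :=
    ((h₃ t).sub ((h₂ t).const_mul 2)).sub ((h₁ t).const_mul c)
  rw [BiLap, lap_u.lap_eq, lap_rpow_norm_mul_comp_neg_log (a - 2) hψ hψ' hx,
    show a - 2 - 2 = a - 4 by ring, ha, hc]
  ring_nf

theorem biLap_eq_rpow_iff_delaunay {n : ℕ} (hn : n ≠ 4) {v v₁ v₂ v₃ v₄ : ℝ → ℝ}
    (h₀ : ∀ t, HasDerivAt v (v₁ t) t) (h₁ : ∀ t, HasDerivAt v₁ (v₂ t) t)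
    (h₂ : ∀ t, HasDerivAt v₂ (v₃ t) t) (h₃ : ∀ t, HasDerivAt v₃ (v₄ t) t)
    (hv : ∀ t, 0 ≤ v t) {x : EuclideanSpace ℝ (Fin n)} (hx : x ≠ 0) :
    BiLap (fun y => ‖y‖ ^ (((4 : ℝ) - n) / 2) * v (-log ‖y‖)) x =
        (n * (n - 4) * (n ^ 2 - 4) / 16 : ℝ) *
          (‖x‖ ^ (((4 : ℝ) - n) / 2) * v (-log ‖x‖)) ^ (((n : ℝ) + 4) / ((n : ℝ) - 4)) ↔
      v₄ (-log ‖x‖) - ((n * (n - 4) + 8) / 2 : ℝ) * v₂ (-log ‖x‖) +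
          (n ^ 2 * (n - 4) ^ 2 / 16 : ℝ) * v (-log ‖x‖) -
          (n * (n ^ 2 - 4) * (n - 4) / 16 : ℝ) *
            v (-log ‖x‖) ^ (((n : ℝ) + 4) / ((n : ℝ) - 4)) = 0 := by
  have hr : 0 < ‖x‖ := norm_pos_iff.2 hx
  have hn' : (n : ℝ) - 4 ≠ 0 := sub_ne_zero.2 (by exact_mod_cast hn)
  have hu : (‖x‖ ^ (((4 : ℝ) - n) / 2) * v (-log ‖x‖)) ^ (((n : ℝ) + 4) / ((n : ℝ) - 4)) =
      ‖x‖ ^ (((4 : ℝ) - n) / 2 - 4) * v (-log ‖x‖) ^ (((n : ℝ) + 4) / ((n : ℝ) - 4)) := by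
    rw [mul_rpow (rpow_nonneg hr.le _) (hv _), ← rpow_mul hr.le]
    congr 2
    field_simp
    ring
  rw [biLap_emdenFowler h₀ h₁ h₂ h₃ hx, hu, mul_left_comm,
    mul_right_inj' (rpow_pos_of_pos hr _).ne']
  constructor <;> intro h <;> linear_combination h

/-- `u(x) = |x|^{(4−n)/2} v(−log|x|)` solves the constant Q-curvature
equation on `ℝⁿ \ {0}` if and only if `v` solves the Delaunay ODE on `ℝ`. -/
theorem stmt_5 (n : ℕ) (hn : 5 ≤ n) (v : ℝ → ℝ) (hv : ContDiff ℝ 4 v)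
    (hvpos : ∀ t, 0 < v t) :
    (∀ x : EuclideanSpace ℝ (Fin n), x ≠ 0 →
        BiLap (fun y => ‖y‖ ^ (((4 : ℝ) - n) / 2) * v (-Real.log ‖y‖)) x =
          (n * (n - 4) * (n ^ 2 - 4) / 16 : ℝ) *
            (‖x‖ ^ (((4 : ℝ) - n) / 2) * v (-Real.log ‖x‖)) ^
              (((n : ℝ) + 4) / ((n : ℝ) - 4))) ↔
    (∀ t : ℝ,
        iteratedDeriv 4 v t - ((n * (n - 4) + 8) / 2 : ℝ) * iteratedDeriv 2 v t +
          (n ^ 2 * (n - 4) ^ 2 / 16 : ℝ) * v t -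
          (n * (n ^ 2 - 4) * (n - 4) / 16 : ℝ) *
            v t ^ (((n : ℝ) + 4) / ((n : ℝ) - 4)) = 0) := by
  have hD (k : ℕ) (hk : k < 4) := hasDerivAt_iteratedDeriv hv (k := k) (mod_cast hk)
  have key (x : EuclideanSpace ℝ (Fin n)) (hx : x ≠ 0) :=
    biLap_eq_rpow_iff_delaunay (by omega) (iteratedDeriv_zero (f := v) ▸ hD 0 (by norm_num))
      (hD 1 (by norm_num)) (hD 2 (by norm_num)) (hD 3 (by norm_num)) (fun t => (hvpos t).le) hx
  constructor
  · intro h t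
    have : Nontrivial (Fin n) := Fin.nontrivial_iff_two_le.2 (by omega)
    obtain ⟨x, hx⟩ := exists_norm_eq (EuclideanSpace ℝ (Fin n)) (exp_pos (-t)).le
    have hx0 : x ≠ 0 := norm_pos_iff.1 (hx ▸ exp_pos (-t))
    simpa [hx] using (key x hx0).1 (h x hx0)
  · intro h x hx
    exact (key x hx).2 (h _)
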